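/- arXiv:2302.03115 — 4 statements merged into one kernel-verified Lean document; each statement's English description precedes it below -/
import Mathlib

section
/- Let (x_1,y_1),...,(x_k,y_k) be drawn i.i.d. from D, let α = (1/k)·Σ_{i=1}^k y_i be the label proportion of the bag, and for a fixed index j let the surrogate label ỹ_j be drawn (conditionally on the bag) from Bernoulli(α). Then for any bounded measurable function g : X × {0,1} → ℝ^d, E[g(x_j, ỹ_j)] = (1/k)·E[g(x_j, y_j)] + ((k−1)(1−p)/k)·E[g(x_j, 0)] + ((k−1)p/k)·E[g(x_j, 1)], where the expectation on the left is over both the sample and the surrogate label. -/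
open MeasureTheory Real

noncomputable section

/-- Real value of a `{0,1}` label encoded as a `Bool`. -/
def bval (b : Bool) : ℝ := if b then 1 else 0

/-!
Realise the surrogate label as `ỹⱼ = 1{U ≤ α}` with `U` uniform on `[0,1]` and independent of
the bag. Integrating out `U` first replaces `g(xⱼ, ỹⱼ)` by `α g(xⱼ, 1) + (1 - α) g(xⱼ, 0)`, which
is the average `(1/k) Σᵢ g(xⱼ, yᵢ)` over the labels of the bag. The term `i = j` has mean `E g`;
for `i ≠ j` the feature `xⱼ` and the label `yᵢ` come from independent draws, so
`E g(xⱼ, yᵢ) = p E g(x, 1) + (1 - p) E g(x, 0)`.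
-/

section

variable {E : Type*} [NormedAddCommGroup E] [NormedSpace ℝ E]

lemma bval_nonneg (b : Bool) : 0 ≤ bval b := by
  cases b <;> simp [bval]

lemma bval_le_one (b : Bool) : bval b ≤ 1 := by
  cases b <;> simp [bval]

lemma bval_smul_add_one_sub_bval_smul (b : Bool) (φ : Bool → E) :
    bval b • φ true + (1 - bval b) • φ false = φ b := by
  cases b <;> simp [bval]

lemma label_mean_mem_Icc {k : ℕ} (b : Fin k → Bool) :
    (1 / (k:ℝ)) * ∑ i, bval (b i) ∈ Set.Icc 0 1 := by
  have hsum : ∑ i, bval (b i) ≤ k := by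
    simpa using Finset.sum_le_sum fun i (_ : i ∈ Finset.univ) => bval_le_one (b i)
  refine ⟨mul_nonneg (by positivity) (Finset.sum_nonneg fun i _ => bval_nonneg (b i)), ?_⟩
  rcases (Nat.cast_nonneg k : (0:ℝ) ≤ k).eq_or_lt with hk | hk
  · simp [← hk]
  · rw [one_div_mul_eq_div, div_le_one hk]
    exact hsum

lemma label_mean_smul_add_one_sub_smul {k : ℕ} (hk : k ≠ 0) (b : Fin k → Bool) (φ : Bool → E) :
    ((1 / (k:ℝ)) * ∑ i, bval (b i)) • φ true + (1 - (1 / (k:ℝ)) * ∑ i, bval (b i)) • φ false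
      = (1 / (k:ℝ)) • ∑ i, φ (b i) := by
  have hsum : ∑ i, φ (b i)
      = (∑ i, bval (b i)) • φ true + ((k:ℝ) - ∑ i, bval (b i)) • φ false := by
    simp_rw [← bval_smul_add_one_sub_bval_smul (b _) φ]
    simp [Finset.sum_add_distrib, ← Finset.sum_smul, Finset.sum_sub_distrib]
  rw [hsum, smul_add, smul_smul, smul_smul, mul_sub, one_div_mul_cancel (Nat.cast_ne_zero.2 hk)]

section Integrals

variable [CompleteSpace E]

lemma integral_ite_le_uniform {c : ℝ} (hc₀ : 0 ≤ c) (hc₁ : c ≤ 1) (A B : E) :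
    ∫ u, (if u ≤ c then A else B) ∂(volume.restrict (Set.Icc (0:ℝ) 1))
      = c • A + (1 - c) • B := by
  have hIic : (volume.restrict (Set.Icc (0:ℝ) 1)).real (Set.Iic c) = c := by
    have hset : Set.Iic c ∩ Set.Icc 0 1 = Set.Icc 0 c := by
      ext u
      simp only [Set.mem_inter_iff, Set.mem_Iic, Set.mem_Icc]
      constructor
      · rintro ⟨huc, hu₀, -⟩
        exact ⟨hu₀, huc⟩
      · rintro ⟨hu₀, huc⟩
        exact ⟨huc, hu₀, huc.trans hc₁⟩
    rw [measureReal_restrict_apply measurableSet_Iic, hset, Real.volume_real_Icc_of_le hc₀,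
      sub_zero]
  have hite : (fun u : ℝ => if u ≤ c then A else B)
      = fun u => (Set.Iic c).indicator (fun _ => A - B) u + B := by
    ext u
    by_cases hu : u ≤ c <;> simp [hu]
  have : IsProbabilityMeasure (volume.restrict (Set.Icc (0:ℝ) 1)) :=
    ⟨by simp [Real.volume_Icc]⟩
  rw [hite, integral_add ((integrable_const _).indicator measurableSet_Iic) (integrable_const B),
    integral_indicator_const _ measurableSet_Iic, hIic, integral_const, probReal_univ, one_smul]
  module

lemma integral_decide_le_label_mean {k : ℕ} (hk : k ≠ 0) (b : Fin k → Bool) (φ : Bool → E) :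
    ∫ u, φ (decide (u ≤ (1 / (k:ℝ)) * ∑ i, bval (b i))) ∂(volume.restrict (Set.Icc (0:ℝ) 1))
      = (1 / (k:ℝ)) • ∑ i, φ (b i) := by
  obtain ⟨hc₀, hc₁⟩ := label_mean_mem_Icc b
  have hite : ∀ c u : ℝ, φ (decide (u ≤ c)) = if u ≤ c then φ true else φ false := by
    intro c u
    by_cases hu : u ≤ c <;> simp [hu]
  simp_rw [hite]
  rw [integral_ite_le_uniform hc₀ hc₁, label_mean_smul_add_one_sub_smul hk]

lemma integral_comp_snd_bool {X : Type*} [MeasurableSpace X] (D : Measure (X × Bool))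
    [IsProbabilityMeasure D] (φ : Bool → E) :
    ∫ z, φ z.2 ∂D
      = (D {z | z.2 = true}).toReal • φ true + (1 - (D {z | z.2 = true}).toReal) • φ false := by
  have hmap : (D.map Prod.snd).real {true} = (D {z | z.2 = true}).toReal := by
    rw [measureReal_def, Measure.map_apply measurable_snd (measurableSet_singleton _)]
    rfl
  have : IsProbabilityMeasure (D.map Prod.snd) :=
    Measure.isProbabilityMeasure_map measurable_snd.aemeasurable
  rw [← integral_map measurable_snd.aemeasurable StronglyMeasurable.of_discrete.aestronglyMeasurable,
    integral_fintype Integrable.of_finite, Fintype.sum_bool, ← hmap,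
    ← probReal_compl_eq_one_sub (measurableSet_singleton true)]
  simp [Set.compl_def]

end Integrals

section ProductMeasure

open ProbabilityTheory

variable {ι : Type*} [Fintype ι] {Ω : ι → Type*} [∀ i, MeasurableSpace (Ω i)]
  (μ : ∀ i, Measure (Ω i)) [∀ i, IsProbabilityMeasure (μ i)]

lemma Measure.pi_map_eval_pair {i j : ι} (hij : i ≠ j) :
    (Measure.pi μ).map (fun x => (x i, x j)) = (μ i).prod (μ j) := by
  have hind : (fun x : ∀ i, Ω i => x i) ⟂ᵢ[Measure.pi μ] (fun x => x j) :=
    (iIndepFun_pi (X := fun _ => id) fun _ => aemeasurable_id).indepFun hij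
  rw [(indepFun_iff_map_prod_eq_prod_map_map (measurable_pi_apply i).aemeasurable
    (measurable_pi_apply j).aemeasurable).1 hind, (measurePreserving_eval μ i).map_eq,
    (measurePreserving_eval μ j).map_eq]

lemma integral_comp_eval_pair {i j : ι} (hij : i ≠ j) {f : Ω i × Ω j → E}
    (hf : AEStronglyMeasurable f ((μ i).prod (μ j))) :
    ∫ x, f (x i, x j) ∂(Measure.pi μ) = ∫ w, f w ∂((μ i).prod (μ j)) := by
  rw [← Measure.pi_map_eval_pair μ hij,
    integral_map _ (by rwa [Measure.pi_map_eval_pair μ hij])]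
  exact ((measurable_pi_apply i).prodMk (measurable_pi_apply j)).aemeasurable

end ProductMeasure

section LabeledBag

variable [CompleteSpace E] {X : Type*} [MeasurableSpace X] (D : Measure (X × Bool))
  [IsProbabilityMeasure D] {g : X × Bool → E} {M : ℝ}

lemma integral_pi_feature_label_of_ne {ι : Type*} [Fintype ι]
    (hg : StronglyMeasurable g) (hgb : ∀ z, ‖g z‖ ≤ M) {i j : ι} (hij : i ≠ j) :
    ∫ f, g ((f j).1, (f i).2) ∂(Measure.pi fun _ => D)
      = (D {z | z.2 = true}).toReal • ∫ z, g (z.1, true) ∂D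
        + (1 - (D {z | z.2 = true}).toReal) • ∫ z, g (z.1, false) ∂D := by
  have hmeas : StronglyMeasurable fun w : (X × Bool) × (X × Bool) => g (w.2.1, w.1.2) :=
    hg.comp_measurable (measurable_snd.fst.prodMk measurable_fst.snd)
  have hint : Integrable (fun w : (X × Bool) × (X × Bool) => g (w.2.1, w.1.2)) (D.prod D) :=
    .of_bound hmeas.aestronglyMeasurable M (ae_of_all _ fun _ => hgb _)
  rw [integral_comp_eval_pair (fun _ => D) hij hmeas.aestronglyMeasurable, integral_prod _ hint]
  exact integral_comp_snd_bool D fun b => ∫ z, g (z.1, b) ∂D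

lemma integral_pi_label_average {k : ℕ} (hg : StronglyMeasurable g) (hgb : ∀ z, ‖g z‖ ≤ M)
    (j : Fin k) :
    ∫ f, (1 / (k:ℝ)) • ∑ i, g ((f j).1, (f i).2) ∂(Measure.pi fun _ => D)
      = (1 / (k:ℝ)) • (∫ z, g z ∂D)
        + ((((k:ℝ) - 1) * (1 - (D {z | z.2 = true}).toReal)) / k) • (∫ z, g (z.1, false) ∂D)
        + ((((k:ℝ) - 1) * (D {z | z.2 = true}).toReal) / k) • (∫ z, g (z.1, true) ∂D) := by
  have hint : ∀ i, Integrable (fun f : Fin k → X × Bool => g ((f j).1, (f i).2))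
      (Measure.pi fun _ => D) := fun i =>
    .of_bound (hg.comp_measurable ((measurable_pi_apply j).fst.prodMk
      (measurable_pi_apply i).snd)).aestronglyMeasurable M (ae_of_all _ fun _ => hgb _)
  rw [integral_smul, integral_finsetSum _ fun i _ => hint i,
    ← Finset.add_sum_erase _ _ (Finset.mem_univ j),
    integral_comp_eval hg.aestronglyMeasurable,
    Finset.sum_congr rfl fun i hi =>
      integral_pi_feature_label_of_ne D hg hgb (Finset.ne_of_mem_erase hi),
    Finset.sum_const, Finset.card_erase_of_mem (Finset.mem_univ j), Finset.card_univ,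
    Fintype.card_fin, ← Nat.cast_smul_eq_nsmul ℝ, Nat.cast_sub j.pos, Nat.cast_one]
  module

end LabeledBag

end

theorem stmt_0_general
    {X : Type*} [MeasurableSpace X] {d : ℕ}
    (D : Measure (X × Bool)) [IsProbabilityMeasure D]
    (p : ℝ) (hp : p = (D {z : X × Bool | z.2 = true}).toReal)
    (k : ℕ) (j : Fin k)
    (g : X × Bool → EuclideanSpace ℝ (Fin d)) (hg : Measurable g)
    (M : ℝ) (hgb : ∀ z, ‖g z‖ ≤ M)
    -- probability space carrying the bag and an independent uniform `[0,1]` variable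
    (P : Measure ((Fin k → X × Bool) × ℝ))
    (hP : P = (Measure.pi fun _ : Fin k => D).prod
        (volume.restrict (Set.Icc (0:ℝ) 1)))
    -- label proportion of the bag
    (α : ((Fin k → X × Bool) × ℝ) → ℝ)
    (hα : ∀ ω, α ω = (1 / (k:ℝ)) * ∑ i, bval (ω.1 i).2)
    -- surrogate label for `x_j`: `Bernoulli(α)` given the bag
    (ytil : ((Fin k → X × Bool) × ℝ) → Bool)
    (hytil : ∀ ω, ytil ω = true ↔ ω.2 ≤ α ω) :
    ∫ ω, g ((ω.1 j).1, ytil ω) ∂P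
      = (1 / (k:ℝ)) • (∫ z, g z ∂D)
        + ((((k:ℝ) - 1) * (1 - p)) / k) • (∫ z, g (z.1, false) ∂D)
        + ((((k:ℝ) - 1) * p) / k) • (∫ z, g (z.1, true) ∂D) := by
  subst hP hp
  have hαm : Measurable α := by
    have hbval : Measurable bval := measurable_from_top
    rw [funext hα]
    exact (Finset.measurable_sum _ fun i _ =>
      hbval.comp ((measurable_pi_apply i).comp measurable_fst).snd).const_mul _
  have hytilm : Measurable ytil := by
    refine measurable_to_bool ?_
    rw [show ytil ⁻¹' {true} = {ω | ω.2 ≤ α ω} from Set.ext hytil]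
    exact measurableSet_le measurable_snd hαm
  have hgs : StronglyMeasurable g := hg.stronglyMeasurable
  have hint : Integrable (fun ω => g ((ω.1 j).1, ytil ω))
      ((Measure.pi fun _ : Fin k => D).prod (volume.restrict (Set.Icc (0:ℝ) 1))) :=
    .of_bound (hgs.comp_measurable (((measurable_pi_apply j).comp measurable_fst).fst.prodMk
      hytilm)).aestronglyMeasurable M (ae_of_all _ fun _ => hgb _)
  have hinner : ∀ f : Fin k → X × Bool,
      ∫ u, g ((f j).1, ytil (f, u)) ∂(volume.restrict (Set.Icc (0:ℝ) 1))
        = (1 / (k:ℝ)) • ∑ i, g ((f j).1, (f i).2) := by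
    intro f
    have hdraw : ∀ u, ytil (f, u) = decide (u ≤ (1 / (k:ℝ)) * ∑ i, bval (f i).2) := fun u => by
      rw [Bool.eq_iff_iff, hytil, hα, decide_eq_true_iff]
    simp_rw [hdraw]
    exact integral_decide_le_label_mean j.pos.ne' (fun i => (f i).2) fun b => g ((f j).1, b)
  rw [integral_prod _ hint]
  simp_rw [hinner]
  exact integral_pi_label_average D hgs hgb j

/-- Proposition 1, debiasing identity for surrogate labels.
The bag is a vector of `k` i.i.d. draws from `D`; an independent uniform variable on
`[0,1]` is used to draw, conditionally on the bag, a surrogate label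
`ỹⱼ ~ Bernoulli(α)` via `ỹⱼ = 1{U ≤ α}`. -/
theorem stmt_0
    {X : Type*} [MeasurableSpace X] {d : ℕ}
    (D : Measure (X × Bool)) [IsProbabilityMeasure D]
    (p : ℝ) (hp : p = (D {z : X × Bool | z.2 = true}).toReal)
    (k : ℕ) (hk : 1 ≤ k) (j : Fin k)
    (g : X × Bool → EuclideanSpace ℝ (Fin d)) (hg : Measurable g)
    (M : ℝ) (hgb : ∀ z, ‖g z‖ ≤ M)
    -- probability space carrying the bag and an independent uniform `[0,1]` variable
    (P : Measure ((Fin k → X × Bool) × ℝ))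
    (hP : P = (Measure.pi fun _ : Fin k => D).prod
        (volume.restrict (Set.Icc (0:ℝ) 1)))
    -- label proportion of the bag
    (α : ((Fin k → X × Bool) × ℝ) → ℝ)
    (hα : ∀ ω, α ω = (1 / (k:ℝ)) * ∑ i, bval (ω.1 i).2)
    -- surrogate label for `x_j`: `Bernoulli(α)` given the bag
    (ytil : ((Fin k → X × Bool) × ℝ) → Bool)
    (hytil : ∀ ω, ytil ω = true ↔ ω.2 ≤ α ω) :
    ∫ ω, g ((ω.1 j).1, ytil ω) ∂P
      = (1 / (k:ℝ)) • (∫ z, g z ∂D)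
        + ((((k:ℝ) - 1) * (1 - p)) / k) • (∫ z, g (z.1, false) ∂D)
        + ((((k:ℝ) - 1) * p) / k) • (∫ z, g (z.1, true) ∂D) :=
  stmt_0_general D p hp k j g hg M hgb P hP α hα ytil hytil
end
end

section
/- Let (x_1,y_1),...,(x_k,y_k) be drawn i.i.d. from D, let α = (1/k)·Σ_{i=1}^k y_i, and for a fixed index j let ỹ_j ∼ Bernoulli(α) conditionally on the bag. For any bounded measurable function g : X × {0,1} → ℝ^d define g̃(x, ỹ) = k·g(x, ỹ) − (k−1)(1−p)·g(x, 0) − (k−1)p·g(x, 1). Then E[g̃(x_j, ỹ_j)] = E_{(x,y)∼D}[g(x, y)], where the expectation on the left is over the bag and the choice of surrogate label. -/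
open MeasureTheory Real

noncomputable section

/-!
Conditionally on the bag, the surrogate label `ỹ_j` is Bernoulli(α), so
`E[f(x_j, ỹ_j) | bag] = f(x_j, 0) + α • Δf(x_j)` with `Δf(x) = f(x, 1) - f(x, 0)`. Expanding
`α = (1/k) ∑ᵢ yᵢ`, the summand `i = j` contributes `E[y • Δf(x)]`, while each of the `k - 1`
summands `i ≠ j` factors by independence into `p • E[Δf(x)]`. Hence
`E f(x_j, ỹ_j) = (1/k) E_D f + (1 - 1/k) E_D f̄` with `f̄(x) = (1 - p) f(x, 0) + p f(x, 1)`: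
the surrogate label acts like the true label with weight `1/k` and like an independent
Bernoulli(p) label otherwise. Now `g̃ = k g - (k - 1) ḡ` and the bar of `g̃` is again `ḡ`,
so the two terms combine to `E_D g`.
-/

open ProbabilityTheory

section Labels

variable {X E : Type*} [NormedAddCommGroup E] [NormedSpace ℝ E]

theorem bval_mem_Icc (b : Bool) : bval b ∈ Set.Icc (0 : ℝ) 1 := by
  cases b <;> simp [bval]

theorem norm_bval_le_one (b : Bool) : ‖bval b‖ ≤ 1 := by
  cases b <;> simp [bval]

theorem eq_add_bval_smul_sub (f : X × Bool → E) (z : X × Bool) :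
    f z = f (z.1, false) + bval z.2 • (f (z.1, true) - f (z.1, false)) := by
  obtain ⟨x, _ | _⟩ := z <;> simp [bval]

variable [MeasurableSpace X]

theorem integral_bval_snd (D : Measure (X × Bool)) :
    ∫ z, bval z.2 ∂D = D.real {z | z.2 = true} := by
  have hind : ∀ z : X × Bool, bval z.2 = {z : X × Bool | z.2 = true}.indicator 1 z := by
    rintro ⟨x, _ | _⟩ <;> simp [bval]
  rw [integral_congr_ae (ae_of_all _ hind),
    integral_indicator_one (measurableSet_eq_fun measurable_snd measurable_const)]

theorem integral_eq_add_integral_bval_smul [CompleteSpace E] {D : Measure (X × Bool)}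
    {f : X × Bool → E} (hf : ∀ y, Integrable (fun z : X × Bool => f (z.1, y)) D) :
    ∫ z, f z ∂D
      = ∫ z, f (z.1, false) ∂D + ∫ z, bval z.2 • (f (z.1, true) - f (z.1, false)) ∂D := by
  have hbval : StronglyMeasurable fun z : X × Bool => bval z.2 :=
    ((measurable_of_countable bval).comp measurable_snd).stronglyMeasurable
  have hδ : Integrable (fun z : X × Bool => bval z.2 • (f (z.1, true) - f (z.1, false))) D :=
    ((hf true).sub (hf false)).bdd_smul 1 hbval.aestronglyMeasurable
      (ae_of_all _ fun z => norm_bval_le_one z.2)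
  rw [← integral_add (hf false) hδ]
  exact integral_congr_ae (ae_of_all _ (eq_add_bval_smul_sub f))

end Labels

section Uniform

variable {E : Type*} [NormedAddCommGroup E] [NormedSpace ℝ E] [CompleteSpace E]

theorem measureReal_restrict_Icc_Iic {a b t : ℝ} (ht : t ∈ Set.Icc a b) :
    (volume.restrict (Set.Icc a b)).real (Set.Iic t) = t - a := by
  have hset : Set.Iic t ∩ Set.Icc a b = Set.Icc a t := by
    ext u
    simp only [Set.mem_inter_iff, Set.mem_Iic, Set.mem_Icc]
    constructor <;> intro h <;> grind
  rw [measureReal_restrict_apply measurableSet_Iic, hset, Real.volume_real_Icc,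
    max_eq_left (by linarith [ht.1])]

theorem setIntegral_Icc_decide_le {t : ℝ} (ht : t ∈ Set.Icc (0 : ℝ) 1) (f : Bool → E) :
    ∫ u in Set.Icc (0 : ℝ) 1, f (decide (u ≤ t)) = f false + t • (f true - f false) := by
  have hfun : (fun u : ℝ => f (decide (u ≤ t)))
      = fun u => f false + (Set.Iic t).indicator (fun _ => f true - f false) u := by
    funext u
    by_cases hu : u ≤ t <;> simp [hu]
  have : IsProbabilityMeasure (volume.restrict (Set.Icc (0 : ℝ) 1)) := ⟨by simp⟩
  rw [hfun, integral_add (integrable_const _) ((integrable_const _).indicator measurableSet_Iic),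
    integral_const, integral_indicator_const _ measurableSet_Iic, measureReal_restrict_Icc_Iic ht,
    probReal_univ, one_smul, sub_zero]

end Uniform

section Pi

variable {Z E : Type*} [MeasurableSpace Z] [NormedAddCommGroup E] [NormedSpace ℝ E] {k : ℕ}
  (D : Measure Z) [IsProbabilityMeasure D]

theorem integral_comp_eval_smul_comp_eval_of_ne {ℓ : Z → ℝ} {h : Z → E}
    (hℓ : AEStronglyMeasurable ℓ D) (hh : AEStronglyMeasurable h D) {i j : Fin k} (hij : i ≠ j) :
    ∫ b, ℓ (b i) • h (b j) ∂(Measure.pi fun _ : Fin k => D) = (∫ z, ℓ z ∂D) • ∫ z, h z ∂D := by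
  have hind : (fun b : Fin k → Z => b i) ⟂ᵢ[Measure.pi fun _ => D] (fun b => b j) :=
    (iIndepFun_pi (X := fun _ => id) fun _ => aemeasurable_id).indepFun hij
  rw [hind.integral_fun_comp_smul_comp (measurable_pi_apply i).aemeasurable
      (measurable_pi_apply j).aemeasurable, integral_comp_eval hℓ, integral_comp_eval hh]
  · rwa [(measurePreserving_eval _ i).map_eq]
  · rwa [(measurePreserving_eval _ j).map_eq]

theorem integral_sum_smul_comp_eval {ℓ : Z → ℝ} {h : Z → E} {C : ℝ}
    (hℓ : AEStronglyMeasurable ℓ D) (hℓC : ∀ z, ‖ℓ z‖ ≤ C) (hh : Integrable h D) (j : Fin k) :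
    ∫ b, (∑ i, ℓ (b i)) • h (b j) ∂(Measure.pi fun _ : Fin k => D)
      = ∫ z, ℓ z • h z ∂D + ((k - 1 : ℝ) * ∫ z, ℓ z ∂D) • ∫ z, h z ∂D := by
  have hint : ∀ i, Integrable (fun b : Fin k → Z => ℓ (b i) • h (b j)) (Measure.pi fun _ => D) :=
    fun i => (integrable_comp_eval hh).bdd_smul C
      (hℓ.comp_quasiMeasurePreserving (Measure.quasiMeasurePreserving_eval _ i))
      (ae_of_all _ fun b => hℓC (b i))
  simp_rw [Finset.sum_smul]
  rw [integral_finsetSum _ fun i _ => hint i, ← Finset.add_sum_erase _ _ (Finset.mem_univ j),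
    integral_comp_eval (μ := fun _ : Fin k => D) (i := j) (f := fun z => ℓ z • h z)
      (hℓ.smul hh.aestronglyMeasurable),
    Finset.sum_congr rfl fun i hi => integral_comp_eval_smul_comp_eval_of_ne D hℓ
      hh.aestronglyMeasurable (Finset.ne_of_mem_erase hi),
    Finset.sum_const, Finset.card_erase_of_mem (Finset.mem_univ j), Finset.card_univ,
    Fintype.card_fin, ← Nat.cast_smul_eq_nsmul ℝ, Nat.cast_sub j.pos, Nat.cast_one, smul_smul]

end Pi

section Bags

variable {X E : Type*} [NormedAddCommGroup E] [NormedSpace ℝ E]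

def labelProportion {k : ℕ} (b : Fin k → X × Bool) : ℝ := (1 / (k : ℝ)) * ∑ i, bval (b i).2

theorem labelProportion_mem_Icc {k : ℕ} (b : Fin k → X × Bool) :
    labelProportion b ∈ Set.Icc (0 : ℝ) 1 := by
  rcases Nat.eq_zero_or_pos k with rfl | hk
  · simp [labelProportion]
  have hsum : ∑ i, bval (b i).2 ≤ k := by
    simpa using Finset.sum_le_sum fun i (_ : i ∈ Finset.univ) => (bval_mem_Icc (b i).2).2
  refine ⟨mul_nonneg (by positivity) (Finset.sum_nonneg fun i _ => (bval_mem_Icc _).1), ?_⟩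
  rwa [labelProportion, one_div, inv_mul_le_one₀ (by exact_mod_cast hk)]

theorem norm_labelProportion_le_one {k : ℕ} (b : Fin k → X × Bool) :
    ‖labelProportion b‖ ≤ 1 := by
  rw [Real.norm_of_nonneg (labelProportion_mem_Icc b).1]
  exact (labelProportion_mem_Icc b).2

variable [MeasurableSpace X] {k : ℕ}

theorem measurable_labelProportion :
    Measurable (labelProportion : (Fin k → X × Bool) → ℝ) := by
  unfold labelProportion
  fun_prop

theorem integral_labelProportion_smul (D : Measure (X × Bool)) [IsProbabilityMeasure D]
    {h : X → E} (hh : Integrable (fun z : X × Bool => h z.1) D) (j : Fin k) :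
    ∫ b, labelProportion b • h (b j).1 ∂(Measure.pi fun _ : Fin k => D)
      = (1 / k : ℝ) • (∫ z, bval z.2 • h z.1 ∂D
          + ((k - 1 : ℝ) * D.real {z | z.2 = true}) • ∫ z, h z.1 ∂D) := by
  have hbval : StronglyMeasurable fun z : X × Bool => bval z.2 :=
    ((measurable_of_countable bval).comp measurable_snd).stronglyMeasurable
  simp_rw [labelProportion, mul_smul]
  rw [integral_smul, integral_sum_smul_comp_eval D hbval.aestronglyMeasurable
    (fun z => norm_bval_le_one z.2) hh, integral_bval_snd, mul_smul]

end Bags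

section BernoulliAverage

variable {X E : Type*} [NormedAddCommGroup E] [NormedSpace ℝ E]

def bernoulliAverage (p : ℝ) (f : X × Bool → E) (x : X) : E :=
  (1 - p) • f (x, false) + p • f (x, true)

theorem norm_bernoulliAverage_le {p C : ℝ} (hp : p ∈ Set.Icc (0 : ℝ) 1) {f : X × Bool → E}
    (hfC : ∀ z, ‖f z‖ ≤ C) (x : X) : ‖bernoulliAverage p f x‖ ≤ C := by
  have hp' : 0 ≤ 1 - p := sub_nonneg.2 hp.2
  calc ‖bernoulliAverage p f x‖ ≤ ‖(1 - p) • f (x, false)‖ + ‖p • f (x, true)‖ := norm_add_le _ _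
    _ = (1 - p) * ‖f (x, false)‖ + p * ‖f (x, true)‖ := by
      rw [norm_smul, norm_smul, Real.norm_of_nonneg hp', Real.norm_of_nonneg hp.1]
    _ ≤ (1 - p) * C + p * C := by
      gcongr
      · exact hfC _
      · exact hp.1
      · exact hfC _
    _ = C := by ring

variable [MeasurableSpace X]

theorem stronglyMeasurable_bernoulliAverage {p : ℝ} {f : X × Bool → E}
    (hf : StronglyMeasurable f) : StronglyMeasurable (bernoulliAverage p f) := by
  have hf_label (y : Bool) : StronglyMeasurable fun x : X => f (x, y) :=
    hf.comp_measurable (measurable_id.prodMk measurable_const)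
  exact ((hf_label false).const_smul _).add ((hf_label true).const_smul _)

theorem integral_bernoulliAverage [CompleteSpace E] {D : Measure (X × Bool)} (p : ℝ)
    {f : X × Bool → E} (hf : ∀ y, Integrable (fun z : X × Bool => f (z.1, y)) D) :
    ∫ z, bernoulliAverage p f z.1 ∂D
      = ∫ z, f (z.1, false) ∂D + p • ∫ z, (f (z.1, true) - f (z.1, false)) ∂D := by
  have hδ : Integrable (fun z : X × Bool => p • (f (z.1, true) - f (z.1, false))) D :=
    ((hf true).sub (hf false)).smul p
  rw [← integral_smul, ← integral_add (hf false) hδ]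
  congr with z
  simp only [bernoulliAverage]
  module

end BernoulliAverage

section Surrogate

variable {X E : Type*} [MeasurableSpace X] [NormedAddCommGroup E] [NormedSpace ℝ E]
  [CompleteSpace E] {k : ℕ} (D : Measure (X × Bool)) [IsProbabilityMeasure D]
  {f : X × Bool → E} {C : ℝ}

theorem integral_surrogate_eq_integral_pi (hf : StronglyMeasurable f) (hfC : ∀ z, ‖f z‖ ≤ C)
    (j : Fin k) :
    ∫ ω, f ((ω.1 j).1, decide (ω.2 ≤ labelProportion ω.1))
        ∂(Measure.pi fun _ : Fin k => D).prod (volume.restrict (Set.Icc (0 : ℝ) 1))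
      = ∫ b, f ((b j).1, false) + labelProportion b • (f ((b j).1, true) - f ((b j).1, false))
        ∂(Measure.pi fun _ : Fin k => D) := by
  have : IsProbabilityMeasure (volume.restrict (Set.Icc (0 : ℝ) 1)) := ⟨by simp⟩
  have hmeas : Measurable fun ω : (Fin k → X × Bool) × ℝ =>
      ((ω.1 j).1, decide (ω.2 ≤ labelProportion ω.1)) := by
    refine (measurable_fst.comp ((measurable_pi_apply j).comp measurable_fst)).prodMk
      (measurable_to_bool ?_)
    simp only [Set.preimage, Set.mem_singleton_iff, decide_eq_true_eq]
    exact measurableSet_le (f := fun ω : (Fin k → X × Bool) × ℝ => ω.2)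
      (g := fun ω => labelProportion ω.1) measurable_snd
      (measurable_labelProportion.comp measurable_fst)
  rw [integral_prod (fun ω => f ((ω.1 j).1, decide (ω.2 ≤ labelProportion ω.1)))
    (.of_bound (hf.comp_measurable hmeas).aestronglyMeasurable C (ae_of_all _ fun ω => hfC _))]
  congr 1 with b
  exact setIntegral_Icc_decide_le (labelProportion_mem_Icc b) fun y => f ((b j).1, y)

theorem integral_surrogate (hf : StronglyMeasurable f) (hfC : ∀ z, ‖f z‖ ≤ C) (j : Fin k) :
    ∫ ω, f ((ω.1 j).1, decide (ω.2 ≤ labelProportion ω.1))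
        ∂(Measure.pi fun _ : Fin k => D).prod (volume.restrict (Set.Icc (0 : ℝ) 1))
      = (1 / k : ℝ) • ∫ z, f z ∂D
        + (1 - 1 / k : ℝ) • ∫ z, bernoulliAverage (D.real {z | z.2 = true}) f z.1 ∂D := by
  have hf_int (y : Bool) : Integrable (fun z : X × Bool => f (z.1, y)) D :=
    .of_bound (hf.comp_measurable (measurable_fst.prodMk measurable_const)).aestronglyMeasurable
      C (ae_of_all _ fun z => hfC _)
  have hδ_int : Integrable (fun z : X × Bool => f (z.1, true) - f (z.1, false)) D :=
    (hf_int true).sub (hf_int false)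
  have hbag_int : Integrable (fun b => labelProportion b • (f ((b j).1, true) - f ((b j).1, false)))
      (Measure.pi fun _ : Fin k => D) :=
    (integrable_comp_eval (μ := fun _ : Fin k => D) (i := j) hδ_int).bdd_smul 1
      measurable_labelProportion.aestronglyMeasurable
      (ae_of_all _ norm_labelProportion_le_one)
  rw [integral_surrogate_eq_integral_pi D hf hfC j,
    integral_add (integrable_comp_eval (hf_int false)) hbag_int,
    integral_labelProportion_smul (h := fun x => f (x, true) - f (x, false)) D hδ_int,
    integral_comp_eval (μ := fun _ : Fin k => D) (i := j) (f := fun z => f (z.1, false))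
      (hf_int false).aestronglyMeasurable,
    integral_eq_add_integral_bval_smul hf_int, integral_bernoulliAverage _ hf_int]
  have hk : (k : ℝ) * (1 / k) = 1 := mul_one_div_cancel (Nat.cast_ne_zero.mpr j.pos.ne')
  linear_combination (norm := module)
    hk • (D.real {z | z.2 = true} • ∫ z, (f (z.1, true) - f (z.1, false)) ∂D)

end Surrogate

section Debiased

variable {X E : Type*} [NormedAddCommGroup E] [NormedSpace ℝ E]

/-- The paper's `g̃ = k g - (k - 1)(1 - p) g(·, 0) - (k - 1) p g(·, 1)`. -/
def debiased (k : ℕ) (p : ℝ) (f : X × Bool → E) (z : X × Bool) : E :=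
  (k : ℝ) • f z - ((k : ℝ) - 1) • bernoulliAverage p f z.1

theorem bernoulliAverage_debiased (k : ℕ) (p : ℝ) (f : X × Bool → E) :
    bernoulliAverage p (debiased k p f) = bernoulliAverage p f := by
  funext x
  simp only [debiased, bernoulliAverage]
  module

theorem norm_debiased_le {k : ℕ} (hk : 1 ≤ k) {p C : ℝ} (hp : p ∈ Set.Icc (0 : ℝ) 1)
    {f : X × Bool → E} (hfC : ∀ z, ‖f z‖ ≤ C) (z : X × Bool) :
    ‖debiased k p f z‖ ≤ k * C + (k - 1) * C := by
  have hk' : (1 : ℝ) ≤ k := by exact_mod_cast hk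
  calc ‖debiased k p f z‖ ≤ ‖(k : ℝ) • f z‖ + ‖((k : ℝ) - 1) • bernoulliAverage p f z.1‖ :=
        norm_sub_le _ _
    _ = k * ‖f z‖ + (k - 1) * ‖bernoulliAverage p f z.1‖ := by
      rw [norm_smul, norm_smul, Real.norm_natCast, Real.norm_of_nonneg (by linarith)]
    _ ≤ k * C + (k - 1) * C := by
      gcongr
      · exact hfC z
      · exact norm_bernoulliAverage_le hp hfC z.1

variable [MeasurableSpace X]

theorem stronglyMeasurable_debiased {k : ℕ} {p : ℝ} {f : X × Bool → E}
    (hf : StronglyMeasurable f) : StronglyMeasurable (debiased k p f) :=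
  (hf.const_smul _).sub
    (((stronglyMeasurable_bernoulliAverage hf).comp_measurable measurable_fst).const_smul _)

theorem integral_debiased_surrogate [CompleteSpace E] {k : ℕ} (D : Measure (X × Bool))
    [IsProbabilityMeasure D] {f : X × Bool → E} {C : ℝ} (hf : StronglyMeasurable f)
    (hfC : ∀ z, ‖f z‖ ≤ C) (j : Fin k) :
    ∫ ω, debiased k (D.real {z | z.2 = true}) f ((ω.1 j).1, decide (ω.2 ≤ labelProportion ω.1))
        ∂(Measure.pi fun _ : Fin k => D).prod (volume.restrict (Set.Icc (0 : ℝ) 1))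
      = ∫ z, f z ∂D := by
  set p := D.real {z : X × Bool | z.2 = true}
  have hp : p ∈ Set.Icc (0 : ℝ) 1 := ⟨measureReal_nonneg, measureReal_le_one⟩
  have hf_int : Integrable f D := .of_bound hf.aestronglyMeasurable C (ae_of_all _ hfC)
  have havg_int : Integrable (fun z => bernoulliAverage p f z.1) D :=
    .of_bound ((stronglyMeasurable_bernoulliAverage hf).comp_measurable
      measurable_fst).aestronglyMeasurable C
      (ae_of_all _ fun z => norm_bernoulliAverage_le hp hfC z.1)
  rw [integral_surrogate D (stronglyMeasurable_debiased hf) (norm_debiased_le j.pos hp hfC) j,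
    bernoulliAverage_debiased]
  simp only [debiased]
  rw [integral_sub (f := fun z => (k : ℝ) • f z)
      (g := fun z => ((k : ℝ) - 1) • bernoulliAverage p f z.1) (hf_int.smul _) (havg_int.smul _),
    integral_smul, integral_smul]
  have hk : (k : ℝ) * (1 / k) = 1 := mul_one_div_cancel (Nat.cast_ne_zero.mpr j.pos.ne')
  linear_combination (norm := module)
    hk • (∫ z, f z ∂D - ∫ z, bernoulliAverage p f z.1 ∂D)

end Debiased

theorem stmt_1_general
    {X : Type*} [MeasurableSpace X] {d : ℕ}
    (D : Measure (X × Bool)) [IsProbabilityMeasure D]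
    (p : ℝ) (hp : p = (D {z : X × Bool | z.2 = true}).toReal)
    (k : ℕ) (j : Fin k)
    (g : X × Bool → EuclideanSpace ℝ (Fin d)) (hg : Measurable g)
    (M : ℝ) (hgb : ∀ z, ‖g z‖ ≤ M)
    -- probability space carrying the bag and an independent uniform `[0,1]` variable
    (P : Measure ((Fin k → X × Bool) × ℝ))
    (hP : P = (Measure.pi fun _ : Fin k => D).prod
        (volume.restrict (Set.Icc (0:ℝ) 1)))
    -- label proportion of the bag
    (α : ((Fin k → X × Bool) × ℝ) → ℝ)
    (hα : ∀ ω, α ω = (1 / (k:ℝ)) * ∑ i, bval (ω.1 i).2)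
    -- surrogate label for `x_j`: `Bernoulli(α)` given the bag
    (ytil : ((Fin k → X × Bool) × ℝ) → Bool)
    (hytil : ∀ ω, ytil ω = true ↔ ω.2 ≤ α ω)
    -- the debiased function
    (gtil : X × Bool → EuclideanSpace ℝ (Fin d))
    (hgtil : ∀ x yt, gtil (x, yt)
        = (k : ℝ) • g (x, yt) - (((k:ℝ) - 1) * (1 - p)) • g (x, false)
          - (((k:ℝ) - 1) * p) • g (x, true)) :
    ∫ ω, gtil ((ω.1 j).1, ytil ω) ∂P = ∫ z, g z ∂D := by
  subst hP hp
  have hytil_eq : ytil = fun ω => decide (ω.2 ≤ labelProportion ω.1) := by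
    funext ω
    rw [Bool.eq_iff_iff, hytil, decide_eq_true_iff, hα]
    rfl
  have hgtil_eq : gtil = debiased k (D.real {z | z.2 = true}) g := by
    funext ⟨x, y⟩
    rw [hgtil, ← measureReal_def]
    simp only [debiased, bernoulliAverage]
    module
  rw [hytil_eq, hgtil_eq]
  exact integral_debiased_surrogate D hg.stronglyMeasurable hgb j

/-- Corollary: unbiasedness of the debiased function `g̃`.
`g̃(x,ỹ) = k·g(x,ỹ) − (k−1)(1−p)·g(x,0) − (k−1)p·g(x,1)` satisfies
`E[g̃(x_j, ỹ_j)] = E_{(x,y)∼D}[g(x,y)]`, the expectation on the left being over the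
bag and the surrogate label. -/
theorem stmt_1
    {X : Type*} [MeasurableSpace X] {d : ℕ}
    (D : Measure (X × Bool)) [IsProbabilityMeasure D]
    (p : ℝ) (hp : p = (D {z : X × Bool | z.2 = true}).toReal)
    (k : ℕ) (hk : 1 ≤ k) (j : Fin k)
    (g : X × Bool → EuclideanSpace ℝ (Fin d)) (hg : Measurable g)
    (M : ℝ) (hgb : ∀ z, ‖g z‖ ≤ M)
    -- probability space carrying the bag and an independent uniform `[0,1]` variable
    (P : Measure ((Fin k → X × Bool) × ℝ))
    (hP : P = (Measure.pi fun _ : Fin k => D).prod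
        (volume.restrict (Set.Icc (0:ℝ) 1)))
    -- label proportion of the bag
    (α : ((Fin k → X × Bool) × ℝ) → ℝ)
    (hα : ∀ ω, α ω = (1 / (k:ℝ)) * ∑ i, bval (ω.1 i).2)
    -- surrogate label for `x_j`: `Bernoulli(α)` given the bag
    (ytil : ((Fin k → X × Bool) × ℝ) → Bool)
    (hytil : ∀ ω, ytil ω = true ↔ ω.2 ≤ α ω)
    -- the debiased function
    (gtil : X × Bool → EuclideanSpace ℝ (Fin d))
    (hgtil : ∀ x yt, gtil (x, yt)
        = (k : ℝ) • g (x, yt) - (((k:ℝ) - 1) * (1 - p)) • g (x, false)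
          - (((k:ℝ) - 1) * p) • g (x, true)) :
    ∫ ω, gtil ((ω.1 j).1, ytil ω) ∂P = ∫ z, g z ∂D :=
  stmt_1_general D p hp k j g hg M hgb P hP α hα ytil hytil gtil hgtil
end
end

section
/- Let (x_1,y_1),...,(x_k,y_k) be drawn i.i.d. from D, let α = (1/k)·Σ_{i=1}^k y_i, let g : X × {0,1} → ℝ^d be measurable with sup_{x,y} ‖g(x,y)‖ ≤ M, and write g̃_i = g̃(x_i, α) where g̃(x, α) = (k(α − p) + p)·g(x, 1) + (k(p − α) + (1 − p))·g(x, 0). Then for any index i ∈ [k], E[ ‖g̃_i‖² ] ≤ 9M² + (k−1)·p·(1−p)·E_{x∼D}[ ‖g(x, 1) − g(x, 0)‖² ]. -/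
/-!
Write `T = ∑_{j ≠ i} (y_j - p)`. Since `k α = y_i + ∑_{j ≠ i} y_j`, the corrected term is
`g̃_i = g(x_i, y_i) + T • (g(x_i, 1) - g(x_i, 0))`. The variable `T` is a sum of `k - 1`
independent centred Bernoulli variables, independent of `(x_i, y_i)`, so the cross term has
mean zero and `E[T²] = (k - 1) p (1 - p)`. Hence
`E‖g̃_i‖² = E‖g(x, y)‖² + (k - 1) p (1 - p) E‖g(x, 1) - g(x, 0)‖²`, and `E‖g(x, y)‖² ≤ M² ≤ 9 M²`.
-/

open MeasureTheory Real

noncomputable section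

open ProbabilityTheory Finset
open scoped RealInnerProductSpace ENNReal

section SecondMoment

variable {Ω β E : Type*} [MeasurableSpace Ω] [MeasurableSpace β] {μ : Measure Ω}
  [NormedAddCommGroup E] [InnerProductSpace ℝ E]

lemma norm_add_smul_sq (a b : E) (t : ℝ) :
    ‖a + t • b‖ ^ 2 = ‖a‖ ^ 2 + t * (2 * ⟪a, b⟫) + t ^ 2 * ‖b‖ ^ 2 := by
  rw [norm_add_sq_real, real_inner_smul_right, norm_smul, Real.norm_eq_abs, mul_pow, sq_abs]
  ring

lemma MeasureTheory.MemLp.integrable_inner {f g : Ω → E} (hf : MemLp f 2 μ)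
    (hg : MemLp g 2 μ) :
    Integrable (fun ω => ⟪f ω, g ω⟫) μ := by
  refine ((hf.integrable_norm_pow two_ne_zero).add (hg.integrable_norm_pow two_ne_zero)).mono'
    (hf.1.inner hg.1) (ae_of_all _ fun ω => ?_)
  rw [Real.norm_eq_abs, Pi.add_apply]
  have := abs_real_inner_le_norm (f ω) (g ω)
  nlinarith [sq_nonneg (‖f ω‖ - ‖g ω‖)]

variable [IsProbabilityMeasure μ]

theorem integral_norm_add_smul_sq_of_indepFun {T : Ω → ℝ} {Z : Ω → β} {u v : β → E}
    (hTZ : T ⟂ᵢ[μ] Z) (hT : MemLp T 2 μ) (hT0 : ∫ ω, T ω ∂μ = 0) (hZ : Measurable Z)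
    (hu : StronglyMeasurable u) (hv : StronglyMeasurable v)
    (huZ : MemLp (fun ω => u (Z ω)) 2 μ) (hvZ : MemLp (fun ω => v (Z ω)) 2 μ) :
    ∫ ω, ‖u (Z ω) + T ω • v (Z ω)‖ ^ 2 ∂μ
      = ∫ ω, ‖u (Z ω)‖ ^ 2 ∂μ + (∫ ω, T ω ^ 2 ∂μ) * ∫ ω, ‖v (Z ω)‖ ^ 2 ∂μ := by
  have huv : StronglyMeasurable fun z => 2 * ⟪u z, v z⟫ := (hu.inner hv).const_mul 2
  have hvv : StronglyMeasurable fun z => ‖v z‖ ^ 2 := hv.norm.pow 2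
  have hind₁ : T ⟂ᵢ[μ] fun ω => 2 * ⟪u (Z ω), v (Z ω)⟫ :=
    hTZ.comp measurable_id huv.measurable
  have hind₂ : (fun ω => T ω ^ 2) ⟂ᵢ[μ] fun ω => ‖v (Z ω)‖ ^ 2 :=
    hTZ.comp (measurable_id.pow_const 2) hvv.measurable
  have hI₁ : Integrable (fun ω => T ω * (2 * ⟪u (Z ω), v (Z ω)⟫)) μ :=
    hind₁.integrable_mul (hT.integrable one_le_two) ((huZ.integrable_inner hvZ).const_mul 2)
  have hI₂ : Integrable (fun ω => T ω ^ 2 * ‖v (Z ω)‖ ^ 2) μ :=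
    hind₂.integrable_mul hT.integrable_sq (hvZ.integrable_norm_pow two_ne_zero)
  have hI₀ : Integrable (fun ω => ‖u (Z ω)‖ ^ 2) μ := huZ.integrable_norm_pow two_ne_zero
  simp_rw [norm_add_smul_sq]
  rw [integral_add (by exact hI₀.add hI₁) hI₂, integral_add hI₀ hI₁,
    hind₁.integral_fun_mul_eq_mul_integral hT.1 (huv.comp_measurable hZ).aestronglyMeasurable,
    hind₂.integral_fun_mul_eq_mul_integral (hT.1.pow 2)
      (hvv.comp_measurable hZ).aestronglyMeasurable,
    hT0, zero_mul, add_zero]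

end SecondMoment

section IidCoordinates

variable {ι β E : Type*} [Fintype ι] [MeasurableSpace β] {ν : Measure β} [IsProbabilityMeasure ν]
  [NormedAddCommGroup E] [InnerProductSpace ℝ E]

lemma indepFun_sum_comp_eval_of_notMem {s : Finset ι} {i : ι} (hi : i ∉ s) {h : β → ℝ}
    (hh : Measurable h) :
    (fun ω : ι → β => ∑ j ∈ s, h (ω j)) ⟂ᵢ[Measure.pi fun _ => ν] fun ω => ω i := by
  have hind := (iIndepFun_pi (μ := fun _ : ι => ν) (X := fun _ => id)
    fun _ => aemeasurable_id).indepFun_finset s {i} (disjoint_singleton_right.mpr hi)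
    fun j => measurable_pi_apply j
  have hsum : Measurable fun x : s → β => ∑ j : s, h (x j) :=
    measurable_sum _ fun j _ => hh.comp (measurable_pi_apply j)
  convert hind.comp hsum (measurable_pi_apply ⟨i, mem_singleton_self i⟩) using 1
  · ext ω
    exact (sum_coe_sort s fun j => h (ω j)).symm
  · rfl

lemma integral_sum_comp_eval {h : β → ℝ} (hh : Integrable h ν) (s : Finset ι) :
    ∫ ω, ∑ j ∈ s, h (ω j) ∂(Measure.pi fun _ => ν) = s.card * ∫ x, h x ∂ν := by
  rw [integral_finsetSum _ fun _ _ => integrable_comp_eval hh]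
  simp only [integral_comp_eval (μ := fun _ : ι => ν) hh.1, sum_const, nsmul_eq_mul]

lemma integral_sum_comp_eval_sq {h : β → ℝ} (hh : Measurable h) (hh2 : MemLp h 2 ν)
    (h0 : ∫ x, h x ∂ν = 0) (s : Finset ι) :
    ∫ ω, (∑ j ∈ s, h (ω j)) ^ 2 ∂(Measure.pi fun _ => ν) = s.card * ∫ x, h x ^ 2 ∂ν := by
  have hmem : ∀ j, MemLp (fun ω : ι → β => h (ω j)) 2 (Measure.pi fun _ => ν) :=
    fun j => hh2.comp_measurePreserving (measurePreserving_eval _ j)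
  have hmean : ∫ ω, ∑ j ∈ s, h (ω j) ∂(Measure.pi fun _ => ν) = 0 := by
    rw [integral_sum_comp_eval (hh2.integrable one_le_two), h0, mul_zero]
  have hvar : Var[fun ω : ι → β => ∑ j ∈ s, h (ω j); Measure.pi fun _ => ν]
      = s.card * Var[h; ν] := by
    have := IndepFun.variance_sum (s := s) (fun j _ => hmem j) fun j _ l _ hjl =>
      (iIndepFun_pi (μ := fun _ : ι => ν) fun _ => hh.aemeasurable).indepFun hjl
    rw [← sum_fn, this, sum_congr rfl fun j _ =>
      (measurePreserving_eval (fun _ : ι => ν) j).variance_fun_comp hh.aemeasurable,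
      sum_const, nsmul_eq_mul]
  rw [← variance_of_integral_eq_zero (memLp_finsetSum s fun j _ => hmem j).1.aemeasurable hmean,
    hvar, variance_of_integral_eq_zero hh.aemeasurable h0]

theorem integral_norm_add_sum_smul_sq_pi {s : Finset ι} {i : ι} (hi : i ∉ s) {h : β → ℝ}
    (hh : Measurable h) (hh2 : MemLp h 2 ν) (h0 : ∫ x, h x ∂ν = 0) {u v : β → E}
    (hu : StronglyMeasurable u) (hv : StronglyMeasurable v)
    (hu2 : MemLp u 2 ν) (hv2 : MemLp v 2 ν) :
    ∫ ω, ‖u (ω i) + (∑ j ∈ s, h (ω j)) • v (ω i)‖ ^ 2 ∂(Measure.pi fun _ => ν)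
      = ∫ x, ‖u x‖ ^ 2 ∂ν + s.card * (∫ x, h x ^ 2 ∂ν) * ∫ x, ‖v x‖ ^ 2 ∂ν := by
  rw [integral_norm_add_smul_sq_of_indepFun (indepFun_sum_comp_eval_of_notMem hi hh)
    (memLp_finsetSum s fun j _ => hh2.comp_measurePreserving (measurePreserving_eval _ j))
    (by rw [integral_sum_comp_eval (hh2.integrable one_le_two), h0, mul_zero])
    (measurable_pi_apply i) hu hv
    (hu2.comp_measurePreserving (measurePreserving_eval _ i))
    (hv2.comp_measurePreserving (measurePreserving_eval _ i)),
    integral_sum_comp_eval_sq hh hh2 h0,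
    integral_comp_eval (μ := fun _ : ι => ν) (f := fun x => ‖u x‖ ^ 2)
      (hu.norm.pow 2).aestronglyMeasurable,
    integral_comp_eval (μ := fun _ : ι => ν) (f := fun x => ‖v x‖ ^ 2)
      (hv.norm.pow 2).aestronglyMeasurable]

end IidCoordinates

section Bags

variable {X : Type*}

lemma bval_add_smul_add_one_sub_smul {E : Type*} [AddCommGroup E] [Module ℝ E]
    (g : X × Bool → E) (x : X) (b : Bool) (c : ℝ) :
    (bval b + c) • g (x, true) + (1 - (bval b + c)) • g (x, false)
      = g (x, b) + c • (g (x, true) - g (x, false)) := by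
  cases b <;> simp only [bval, Bool.false_eq_true, if_true, if_false] <;> module

lemma mul_mean_sub_add_eq_add_sum_erase {k : ℕ} (i : Fin k) (y : Fin k → ℝ) (p : ℝ) :
    (k : ℝ) * ((1 / k) * ∑ j, y j - p) + p = y i + ∑ j ∈ univ.erase i, (y j - p) := by
  have hk : (k : ℝ) ≠ 0 := Nat.cast_ne_zero.mpr i.pos.ne'
  rw [← add_sum_erase _ _ (mem_univ i), sum_sub_distrib, sum_const,
    card_erase_of_mem (mem_univ i), card_univ, Fintype.card_fin, nsmul_eq_mul, Nat.cast_sub i.pos]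
  field_simp
  ring

variable [MeasurableSpace X]

lemma measurable_bval_snd : Measurable fun z : X × Bool => bval z.2 :=
  (Measurable.of_discrete (f := bval)).comp measurable_snd

variable (D : Measure (X × Bool)) [IsProbabilityMeasure D]

lemma memLp_bval_snd (q : ℝ≥0∞) : MemLp (fun z : X × Bool => bval z.2) q D :=
  .of_bound measurable_bval_snd.aestronglyMeasurable 1
    (ae_of_all _ fun z => by cases z.2 <;> simp [bval])

lemma integral_bval_snd_sub {p : ℝ} (hp : p = (D {z | z.2 = true}).toReal) :
    ∫ z, (bval z.2 - p) ∂D = 0 := by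
  have hs : MeasurableSet {z : X × Bool | z.2 = true} :=
    measurable_snd (measurableSet_singleton true)
  have hmean : ∫ z, bval z.2 ∂D = p := by
    rw [hp, ← measureReal_def, ← integral_indicator_one hs]
    congr 1 with ⟨x, _ | _⟩ <;> simp [bval]
  rw [integral_sub (memLp_one_iff_integrable.mp (memLp_bval_snd D 1)) (integrable_const p),
    hmean, integral_const, probReal_univ, one_smul, sub_self]

lemma integral_bval_snd_sub_sq {p : ℝ} (hp : p = (D {z | z.2 = true}).toReal) :
    ∫ z, (bval z.2 - p) ^ 2 ∂D = p * (1 - p) := by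
  have hsq : ∀ z : X × Bool,
      (bval z.2 - p) ^ 2 = (1 - 2 * p) * (bval z.2 - p) + p * (1 - p) := by
    rintro ⟨x, _ | _⟩ <;> simp only [bval, Bool.false_eq_true, if_true, if_false] <;> ring
  have hint : Integrable (fun z : X × Bool => bval z.2 - p) D :=
    memLp_one_iff_integrable.mp ((memLp_bval_snd D 1).sub (memLp_const p))
  simp_rw [hsq]
  rw [integral_add (hint.const_mul _) (integrable_const _), integral_const_mul,
    integral_bval_snd_sub D hp, integral_const, probReal_univ, one_smul, mul_zero, zero_add]

end Bags

theorem stmt_6_general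
    {X : Type*} [MeasurableSpace X] {d : ℕ}
    (D : Measure (X × Bool)) [IsProbabilityMeasure D]
    (p : ℝ) (hp : p = (D {z : X × Bool | z.2 = true}).toReal)
    (k : ℕ) (i : Fin k)
    (g : X × Bool → EuclideanSpace ℝ (Fin d)) (hg : Measurable g)
    (M : ℝ) (hgb : ∀ z, ‖g z‖ ≤ M)
    -- label proportion of the bag
    (α : (Fin k → X × Bool) → ℝ)
    (hα : ∀ ω, α ω = (1 / (k:ℝ)) * ∑ i', bval (ω i').2)
    -- the soft label corrected function
    (gtil : X → ℝ → EuclideanSpace ℝ (Fin d))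
    (hgtil : ∀ x a, gtil x a
        = ((k:ℝ) * (a - p) + p) • g (x, true)
          + ((k:ℝ) * (p - a) + (1 - p)) • g (x, false)) :
    ∫ ω, ‖gtil (ω i).1 (α ω)‖ ^ 2 ∂(Measure.pi fun _ : Fin k => D)
      ≤ 9 * M ^ 2
        + ((k:ℝ) - 1) * p * (1 - p)
            * ∫ x, ‖g (x, true) - g (x, false)‖ ^ 2 ∂(D.map Prod.fst) := by
  set Δ : X × Bool → EuclideanSpace ℝ (Fin d) := fun z => g (z.1, true) - g (z.1, false)
  have hΔ : Measurable Δ := by fun_prop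
  have hΔb : ∀ z, ‖Δ z‖ ≤ 2 * M := fun z =>
    (norm_sub_le _ _).trans (by linarith [hgb (z.1, true), hgb (z.1, false)])
  have hrepr : ∀ ω : Fin k → X × Bool, gtil (ω i).1 (α ω)
      = g (ω i) + (∑ j ∈ univ.erase i, (bval (ω j).2 - p)) • Δ (ω i) := fun ω => by
    rw [hgtil, show (k : ℝ) * (p - α ω) + (1 - p) = 1 - ((k : ℝ) * (α ω - p) + p) by ring, hα,
      mul_mean_sub_add_eq_add_sum_erase i (fun j => bval (ω j).2) p]
    exact bval_add_smul_add_one_sub_smul g (ω i).1 (ω i).2 _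
  have hgM : ∫ z, ‖g z‖ ^ 2 ∂D ≤ M ^ 2 := by
    simpa using integral_mono_of_nonneg (ae_of_all _ fun z => sq_nonneg ‖g z‖)
      (integrable_const (μ := D) (M ^ 2))
      (ae_of_all _ fun z => pow_le_pow_left₀ (norm_nonneg _) (hgb z) 2)
  simp_rw [hrepr]
  rw [integral_norm_add_sum_smul_sq_pi (notMem_erase i univ) (measurable_bval_snd.sub_const p)
    ((memLp_bval_snd D 2).sub (memLp_const p)) (integral_bval_snd_sub D hp)
    hg.stronglyMeasurable hΔ.stronglyMeasurable
    (.of_bound hg.aestronglyMeasurable M (ae_of_all _ hgb))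
    (.of_bound hΔ.aestronglyMeasurable (2 * M) (ae_of_all _ hΔb)),
    integral_bval_snd_sub_sq D hp, card_erase_of_mem (mem_univ i), card_univ, Fintype.card_fin,
    Nat.cast_sub i.pos, Nat.cast_one, integral_map measurable_fst.aemeasurable (by fun_prop)]
  linarith [sq_nonneg M]

/-- second-moment bound for a single soft-label corrected term.
If `sup ‖g‖ ≤ M` then for any `i ∈ [k]`,
`E‖g̃_i‖² ≤ 9M² + (k−1)p(1−p)·E_{x∼D}‖g(x,1) − g(x,0)‖²`,
where `E_{x∼D}` is over the marginal of `D` on `X`. -/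
theorem stmt_6
    {X : Type*} [MeasurableSpace X] {d : ℕ}
    (D : Measure (X × Bool)) [IsProbabilityMeasure D]
    (p : ℝ) (hp : p = (D {z : X × Bool | z.2 = true}).toReal)
    (k : ℕ) (hk : 1 ≤ k) (i : Fin k)
    (g : X × Bool → EuclideanSpace ℝ (Fin d)) (hg : Measurable g)
    (M : ℝ) (hgb : ∀ z, ‖g z‖ ≤ M)
    -- label proportion of the bag
    (α : (Fin k → X × Bool) → ℝ)
    (hα : ∀ ω, α ω = (1 / (k:ℝ)) * ∑ i', bval (ω i').2)
    -- the soft label corrected function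
    (gtil : X → ℝ → EuclideanSpace ℝ (Fin d))
    (hgtil : ∀ x a, gtil x a
        = ((k:ℝ) * (a - p) + p) • g (x, true)
          + ((k:ℝ) * (p - a) + (1 - p)) • g (x, false)) :
    ∫ ω, ‖gtil (ω i).1 (α ω)‖ ^ 2 ∂(Measure.pi fun _ : Fin k => D)
      ≤ 9 * M ^ 2
        + ((k:ℝ) - 1) * p * (1 - p)
            * ∫ x, ‖g (x, true) - g (x, false)‖ ^ 2 ∂(D.map Prod.fst) :=
  stmt_6_general D p hp k i g hg M hgb α hα gtil hgtil
end
end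

section
/- Let (x_1,y_1),...,(x_k,y_k) be drawn i.i.d. from a distribution D on X × {1,...,C}, and for each class c ∈ {1,...,C} let α_c = (1/k)·Σ_{i=1}^k 1{y_i = c} and p_c = P_{(x,y)∼D}(y = c). For any bounded measurable g : X × {1,...,C} → ℝ^d define the soft label corrected function g̃(x, α) = Σ_{c=1}^C (k·α_c − (k−1)·p_c)·g(x, c). Then for every index i ∈ [k], E[g̃(x_i, α)] = E_{(x,y)∼D}[g(x, y)], where the expectation on the left is over the bag. -/
/-!
Put `h(z, w) := g(z.1, w.2)`. Since `k α_c = ∑_j 1{y_j = c}` and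
`∑_c p_c g(x, c) = ∫ g(x, w.2) dD(w)`, the corrected function at `x_i` is
`∑_j h(z_i, z_j) - (k - 1) ∫ h(z_i, w) dD(w)`. For `j ≠ i` the samples `z_i`, `z_j` are
independent, so `h(z_i, z_j) - ∫ h(z_i, w) dD(w)` has mean zero, and only the diagonal term
`h(z_i, z_i) = g(z_i)` is left.
-/

open MeasureTheory ProbabilityTheory

theorem sum_sub_smul_eq_add_sum_erase_sub {ι E : Type*} [Fintype ι] [DecidableEq ι]
    [AddCommGroup E] [Module ℝ E] (a : ι → E) (b : E) (i : ι) :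
    ∑ j, a j - ((Fintype.card ι : ℝ) - 1) • b = a i + ∑ j ∈ Finset.univ.erase i, (a j - b) := by
  rw [Finset.sum_sub_distrib, Finset.sum_const, Finset.card_erase_of_mem (Finset.mem_univ i),
    Finset.card_univ, ← Finset.add_sum_erase _ _ (Finset.mem_univ i), add_sub_assoc,
    ← Nat.cast_smul_eq_nsmul ℝ, Nat.cast_pred (Fintype.card_pos_iff.2 ⟨i⟩)]

namespace MeasureTheory

section PairsOfCoordinates

variable {ι Ω E : Type*} [Fintype ι] [MeasurableSpace Ω] [NormedAddCommGroup E]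
  [NormedSpace ℝ E] (μ : Measure Ω) [IsProbabilityMeasure μ]

theorem measurePreserving_eval_pair {i j : ι} (hij : i ≠ j) :
    MeasurePreserving (fun ω : ι → Ω => (ω i, ω j)) (Measure.pi fun _ => μ) (μ.prod μ) := by
  refine ⟨by fun_prop, ?_⟩
  have hind : (fun ω : ι → Ω => ω i) ⟂ᵢ[Measure.pi fun _ => μ] (fun ω => ω j) :=
    (iIndepFun_pi (X := fun _ => id) fun _ => aemeasurable_id).indepFun hij
  rw [(indepFun_iff_map_prod_eq_prod_map_map (measurable_pi_apply i).aemeasurable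
      (measurable_pi_apply j).aemeasurable).1 hind,
    (measurePreserving_eval _ i).map_eq, (measurePreserving_eval _ j).map_eq]

theorem integral_comp_eval_pair {i j : ι} (hij : i ≠ j) {f : Ω × Ω → E}
    (hf : AEStronglyMeasurable f (μ.prod μ)) :
    ∫ ω, f (ω i, ω j) ∂(Measure.pi fun _ => μ) = ∫ z, f z ∂(μ.prod μ) := by
  have hpair := measurePreserving_eval_pair μ hij
  rw [← hpair.map_eq] at hf ⊢
  exact (integral_map hpair.measurable.aemeasurable hf).symm

variable {h : Ω → Ω → E}

theorem integrable_comp_eval_sub_integral {i j : ι} (hij : i ≠ j)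
    (hh : Integrable (Function.uncurry h) (μ.prod μ)) :
    Integrable (fun ω : ι → Ω => h (ω i) (ω j) - ∫ w, h (ω i) w ∂μ) (Measure.pi fun _ => μ) :=
  ((measurePreserving_eval_pair μ hij).integrable_comp_of_integrable hh).sub
    (integrable_comp_eval (X := fun _ => Ω) (μ := fun _ => μ) hh.integral_prod_left)

theorem integral_comp_eval_sub_integral {i j : ι} (hij : i ≠ j)
    (hh : Integrable (Function.uncurry h) (μ.prod μ)) :
    ∫ ω, (h (ω i) (ω j) - ∫ w, h (ω i) w ∂μ) ∂(Measure.pi fun _ => μ) = 0 := by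
  have hψ : Integrable (fun z => ∫ w, h z w ∂μ) μ := hh.integral_prod_left
  have hpair : Integrable (fun ω : ι → Ω => h (ω i) (ω j)) (Measure.pi fun _ => μ) :=
    (measurePreserving_eval_pair μ hij).integrable_comp_of_integrable hh
  have hoff : ∫ ω, h (ω i) (ω j) ∂(Measure.pi fun _ => μ) = ∫ z, ∫ w, h z w ∂μ ∂μ :=
    (integral_comp_eval_pair μ hij hh.aestronglyMeasurable).trans (integral_prod _ hh)
  rw [integral_sub hpair (integrable_comp_eval (X := fun _ => Ω) (μ := fun _ => μ) hψ), hoff,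
    integral_comp_eval (X := fun _ => Ω) (μ := fun _ => μ) hψ.aestronglyMeasurable, sub_self]

theorem integral_sum_comp_eval_sub_integral
    (hdiag : Integrable (fun z => h z z) μ) (hh : Integrable (Function.uncurry h) (μ.prod μ))
    (i : ι) :
    ∫ ω, (∑ j, h (ω i) (ω j) - ((Fintype.card ι : ℝ) - 1) • ∫ w, h (ω i) w ∂μ)
      ∂(Measure.pi fun _ => μ) = ∫ z, h z z ∂μ := by
  classical
  have hoff (j) (hj : j ∈ Finset.univ.erase i) :=
    integrable_comp_eval_sub_integral μ (Finset.ne_of_mem_erase hj).symm hh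
  simp_rw [sum_sub_smul_eq_add_sum_erase_sub _ _ i]
  rw [integral_add (integrable_comp_eval (X := fun _ => Ω) (μ := fun _ => μ) hdiag)
      (integrable_finsetSum _ hoff), integral_finsetSum _ hoff,
    integral_comp_eval (X := fun _ => Ω) (μ := fun _ => μ) (f := fun z => h z z)
      hdiag.aestronglyMeasurable,
    Finset.sum_eq_zero fun j hj =>
      integral_comp_eval_sub_integral μ (Finset.ne_of_mem_erase hj).symm hh, add_zero]

end PairsOfCoordinates

theorem integral_comp_snd_eq_sum {X L E : Type*} [MeasurableSpace X] [MeasurableSpace L]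
    [Fintype L] [MeasurableSingletonClass L] [NormedAddCommGroup E] [NormedSpace ℝ E]
    [CompleteSpace E] (D : Measure (X × L)) [IsFiniteMeasure D] (f : L → E) :
    ∫ z, f z.2 ∂D = ∑ c, D.real {z | z.2 = c} • f c := by
  rw [← integral_map measurable_snd.aemeasurable Integrable.of_finite.aestronglyMeasurable,
    integral_fintype Integrable.of_finite]
  simp_rw [map_measureReal_apply measurable_snd (measurableSet_singleton _)]
  rfl

end MeasureTheory

theorem stmt_14_general
    {X : Type*} [MeasurableSpace X] {d : ℕ} (C : ℕ)
    (D : Measure (X × Fin C)) [IsProbabilityMeasure D]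
    (p : Fin C → ℝ) (hp : ∀ c, p c = (D {z : X × Fin C | z.2 = c}).toReal)
    (k : ℕ) (i : Fin k)
    (g : X × Fin C → EuclideanSpace ℝ (Fin d)) (hg : Measurable g)
    (M : ℝ) (hgb : ∀ z, ‖g z‖ ≤ M)
    -- class proportions of the bag
    (α : Fin C → (Fin k → X × Fin C) → ℝ)
    (hα : ∀ c ω, α c ω = (1 / (k:ℝ)) * ∑ i', if (ω i').2 = c then (1:ℝ) else 0)
    -- the soft label corrected function
    (gtil : X → (Fin C → ℝ) → EuclideanSpace ℝ (Fin d))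
    (hgtil : ∀ x a, gtil x a
        = ∑ c, ((k:ℝ) * a c - ((k:ℝ) - 1) * p c) • g (x, c)) :
    ∫ ω, gtil (ω i).1 (fun c => α c ω) ∂(Measure.pi fun _ : Fin k => D)
      = ∫ z, g z ∂D := by
  have hk : (k : ℝ) ≠ 0 := Nat.cast_ne_zero.2 (Fin.pos i).ne'
  have hmix (x : X) : ∫ w, g (x, w.2) ∂D = ∑ c, p c • g (x, c) := by
    simp only [hp]
    exact integral_comp_snd_eq_sum D fun c => g (x, c)
  have hpt (ω : Fin k → X × Fin C) : gtil (ω i).1 (fun c => α c ω) = ∑ j, g ((ω i).1, (ω j).2)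
      - ((Fintype.card (Fin k) : ℝ) - 1) • ∫ w, g ((ω i).1, w.2) ∂D := by
    simp only [hgtil, hα, hmix, Fintype.card_fin, Finset.smul_sum, sub_smul,
      Finset.sum_sub_distrib, mul_smul, one_div, ← mul_assoc, mul_inv_cancel₀ hk, one_mul,
      Finset.sum_smul, ite_smul, one_smul, zero_smul]
    rw [Finset.sum_comm]
    simp
  have hint : Integrable g D := .of_bound hg.aestronglyMeasurable M (.of_forall hgb)
  have hint₂ : Integrable (fun zw : (X × Fin C) × (X × Fin C) => g (zw.1.1, zw.2.2)) (D.prod D) :=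
    .of_bound (hg.comp (by fun_prop)).aestronglyMeasurable M (.of_forall fun _ => hgb _)
  simp_rw [hpt]
  exact integral_sum_comp_eval_sub_integral D (h := fun z w => g (z.1, w.2)) hint hint₂ i

/-- Theorem 5, multiclass unbiasedness of the soft label
corrected function. With class proportions `α_c = (1/k)Σ_i 1{y_i = c}` and
`p_c = P(y = c)`, the function `g̃(x,α) = Σ_c (k·α_c − (k−1)·p_c)·g(x,c)`
satisfies `E[g̃(x_i, α)] = E_{(x,y)∼D}[g(x,y)]` for every `i ∈ [k]`. -/
theorem stmt_14
    {X : Type*} [MeasurableSpace X] {d : ℕ} (C : ℕ) (hC : 2 ≤ C)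
    (D : Measure (X × Fin C)) [IsProbabilityMeasure D]
    (p : Fin C → ℝ) (hp : ∀ c, p c = (D {z : X × Fin C | z.2 = c}).toReal)
    (k : ℕ) (hk : 1 ≤ k) (i : Fin k)
    (g : X × Fin C → EuclideanSpace ℝ (Fin d)) (hg : Measurable g)
    (M : ℝ) (hgb : ∀ z, ‖g z‖ ≤ M)
    -- class proportions of the bag
    (α : Fin C → (Fin k → X × Fin C) → ℝ)
    (hα : ∀ c ω, α c ω = (1 / (k:ℝ)) * ∑ i', if (ω i').2 = c then (1:ℝ) else 0)
    -- the soft label corrected function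
    (gtil : X → (Fin C → ℝ) → EuclideanSpace ℝ (Fin d))
    (hgtil : ∀ x a, gtil x a
        = ∑ c, ((k:ℝ) * a c - ((k:ℝ) - 1) * p c) • g (x, c)) :
    ∫ ω, gtil (ω i).1 (fun c => α c ω) ∂(Measure.pi fun _ : Fin k => D)
      = ∫ z, g z ∂D :=
  stmt_14_general C D p hp k i g hg M hgb α hα gtil hgtil
end
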